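/- arXiv:1803.03066 — 8 statements merged into one kernel-verified Lean document; each statement's English description precedes it below -/
import Mathlib

section
/- If a complex moment sequence γ has a representing measure supported in a real algebraic subset A of ℂ (the zero set of a polynomial p in z and z̄), then every representing measure for γ is supported in A. -/
open MeasureTheory MvPolynomial

/-- `μ` is a representing measure for the complex sequence `γ`. -/
def IsRepMeasure (γ : ℕ → ℕ → ℂ) (μ : Measure ℂ) : Prop :=
  ∀ m n : ℕ, Integrable (fun z : ℂ => z ^ m * (starRingEnd ℂ z) ^ n) μ ∧
    γ m n = ∫ z : ℂ, z ^ m * (starRingEnd ℂ z) ^ n ∂μ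

/-- The real algebraic subset of `ℂ` determined by `p ∈ ℂ[z, z̄]`. -/
def realAlgSet (p : MvPolynomial (Fin 2) ℂ) : Set ℂ :=
  {z : ℂ | MvPolynomial.eval ![z, starRingEnd ℂ z] p = 0}

lemma eval_monomial_two (d : Fin 2 →₀ ℕ) (c : ℂ) (z : ℂ) :
    MvPolynomial.eval ![z, starRingEnd ℂ z] (monomial d c)
      = c * (z ^ (d 0) * (starRingEnd ℂ z) ^ (d 1)) := by
  rw [eval_monomial, Finsupp.prod_fintype _ _ (fun i => pow_zero _), Fin.prod_univ_two]
  simp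

/-- Key: integrability and moment determination of polynomial integrals. -/
lemma poly_integral (γ : ℕ → ℕ → ℂ) (μ μ' : Measure ℂ)
    (hμ : IsRepMeasure γ μ) (hμ' : IsRepMeasure γ μ') (q : MvPolynomial (Fin 2) ℂ) :
    Integrable (fun z : ℂ => MvPolynomial.eval ![z, starRingEnd ℂ z] q) μ ∧
    Integrable (fun z : ℂ => MvPolynomial.eval ![z, starRingEnd ℂ z] q) μ' ∧
    ∫ z : ℂ, MvPolynomial.eval ![z, starRingEnd ℂ z] q ∂μ
      = ∫ z : ℂ, MvPolynomial.eval ![z, starRingEnd ℂ z] q ∂μ' := by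
  induction q using MvPolynomial.induction_on' with
  | monomial d c =>
    simp only [eval_monomial_two]
    refine ⟨((hμ (d 0) (d 1)).1.const_mul c), ((hμ' (d 0) (d 1)).1.const_mul c), ?_⟩
    rw [integral_const_mul, integral_const_mul, ← (hμ (d 0) (d 1)).2, ← (hμ' (d 0) (d 1)).2]
  | add a b ha hb =>
    obtain ⟨ha1, ha2, ha3⟩ := ha
    obtain ⟨hb1, hb2, hb3⟩ := hb
    refine ⟨?_, ?_, ?_⟩
    · simp only [map_add]; exact ha1.add hb1
    · simp only [map_add]; exact ha2.add hb2
    · simp only [map_add]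
      rw [integral_add ha1 hb1, integral_add ha2 hb2, ha3, hb3]

/-- If a complex moment sequence has a representing measure supported in a real
algebraic subset `A` of `ℂ`, then every representing measure for it is supported in `A`. -/
theorem stmt0 (γ : ℕ → ℕ → ℂ) (p : MvPolynomial (Fin 2) ℂ)
    (μ : Measure ℂ) (hμ : IsRepMeasure γ μ) (hsupp : μ (realAlgSet p)ᶜ = 0) :
    ∀ μ' : Measure ℂ, IsRepMeasure γ μ' → μ' (realAlgSet p)ᶜ = 0 := by
  intro μ' hμ'
  set f : ℂ → ℂ := fun z => MvPolynomial.eval ![z, starRingEnd ℂ z] p with hf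
  set q : MvPolynomial (Fin 2) ℂ :=
    p * rename (Equiv.swap 0 1) (map (starRingEnd ℂ) p) with hq
  have hqeval : ∀ z : ℂ, MvPolynomial.eval ![z, starRingEnd ℂ z] q = f z * starRingEnd ℂ (f z) := by
    intro z
    have hswap : (![z, starRingEnd ℂ z] ∘ (Equiv.swap 0 1) : Fin 2 → ℂ)
        = ![starRingEnd ℂ z, z] := by
      funext i
      fin_cases i <;> simp
    have hconj : starRingEnd ℂ (f z) = MvPolynomial.eval ![starRingEnd ℂ z, z] (map (starRingEnd ℂ) p) := by
      rw [eval_map, hf]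
      have h := eval₂_comp_left (starRingEnd ℂ) (RingHom.id ℂ) ![z, starRingEnd ℂ z] p
      simp only [MvPolynomial.eval, coe_eval₂Hom] at *
      rw [h]
      congr 1
      funext i
      fin_cases i <;> simp
    rw [hq, map_mul, eval_rename, hswap, ← hconj, hf]
  obtain ⟨hint1, hint2, hint3⟩ := poly_integral γ μ μ' hμ hμ' q
  -- the real-valued function normSq ∘ f
  have hre : ∀ z : ℂ, (MvPolynomial.eval ![z, starRingEnd ℂ z] q).re = Complex.normSq (f z) := by
    intro z; rw [hqeval z, Complex.mul_conj]; simp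
  have hintre1 : Integrable (fun z => Complex.normSq (f z)) μ := by
    simpa [hre] using hint1.re
  have hintre2 : Integrable (fun z => Complex.normSq (f z)) μ' := by
    simpa [hre] using hint2.re
  -- ∫ normSq f dμ = 0 since f = 0 a.e. μ
  have hμae : ∀ᵐ z ∂μ, f z = 0 := by
    rw [ae_iff]
    exact measure_mono_null (fun z hz => hz) hsupp
  have hzero : ∫ z, Complex.normSq (f z) ∂μ = 0 := by
    rw [integral_eq_zero_iff_of_nonneg (fun z => Complex.normSq_nonneg _) hintre1]
    filter_upwards [hμae] with z hz
    simp [hz]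
  have hzero' : ∫ z, Complex.normSq (f z) ∂μ' = 0 := by
    have e2 := integral_re hint2
    have e1 := integral_re hint1
    simp only [RCLike.re_to_complex, hre] at e1 e2
    rw [e2, ← hint3, ← e1]
    exact hzero
  have hae' : (fun z => Complex.normSq (f z)) =ᵐ[μ'] 0 :=
    (integral_eq_zero_iff_of_nonneg (fun z => Complex.normSq_nonneg _) hintre2).mp hzero'
  have : ∀ᵐ z ∂μ', f z = 0 := by
    filter_upwards [hae'] with z hz
    exact Complex.normSq_eq_zero.mp hz
  rw [ae_iff] at this
  exact measure_mono_null (fun z hz => hz) this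
end

section
/- If γ is a complex moment sequence and (μ, ν) is a representing pair for some positive definite extension Γ of γ on N_+, then μ + ν(𝕋)·δ₀ is a representing measure for γ. -/
open MeasureTheory
open scoped ComplexOrder

/-- `Γ : ℤ × ℤ → ℂ` (relevant on `N₊ = {(m,n) : m + n ≥ 0}`) is a positive definite
extension of `γ` on `N₊`. -/
def IsPosDefExt (γ : ℕ → ℕ → ℂ) (Γ : ℤ → ℤ → ℂ) : Prop :=
  (∀ m n : ℕ, Γ m n = γ m n) ∧
  ∀ Λ : Finset (ℤ × ℤ), (∀ p ∈ Λ, 0 ≤ p.1 + p.2) → ∀ lam : ℤ × ℤ → ℂ,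
    0 ≤ ∑ p ∈ Λ, ∑ q ∈ Λ,
      lam p * starRingEnd ℂ (lam q) * Γ (p.1 + q.2) (p.2 + q.1)

/-- `(μ, ν)` is a representing pair for `Γ` on `N₊`: `μ` is a Borel measure on `ℂ` with no
mass at `0` (playing the role of a measure on `ℂ \ {0}`), `ν` is a Borel measure on `ℂ`
supported in the unit circle `𝕋`, and
`Γ m n = ∫ z^m z̄^n dμ + δ_{m+n,0} ∫_𝕋 z^m z̄^n dν` for all `(m,n) ∈ N₊`. -/
def IsRepPair (Γ : ℤ → ℤ → ℂ) (μ ν : Measure ℂ) : Prop :=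
  μ {0} = 0 ∧ ν (Metric.sphere (0 : ℂ) 1)ᶜ = 0 ∧
  ∀ m n : ℤ, 0 ≤ m + n →
    Integrable (fun z : ℂ => z ^ m * (starRingEnd ℂ z) ^ n) μ ∧
    Integrable (fun z : ℂ => z ^ m * (starRingEnd ℂ z) ^ n) ν ∧
    Γ m n = (∫ z : ℂ, z ^ m * (starRingEnd ℂ z) ^ n ∂μ) +
      (if m + n = 0 then ∫ z : ℂ, z ^ m * (starRingEnd ℂ z) ^ n ∂ν else 0)

/-- If `(μ, ν)` is a representing pair for a positive definite extension `Γ` of `γ` on `N₊`,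
then `μ + ν(𝕋)·δ₀` is a representing measure for `γ`. -/
theorem stmt7 (γ : ℕ → ℕ → ℂ) (Γ : ℤ → ℤ → ℂ) (μ ν : Measure ℂ)
    (hext : IsPosDefExt γ Γ) (hpair : IsRepPair Γ μ ν) :
    IsRepMeasure γ (μ + ν Set.univ • Measure.dirac (0 : ℂ)) := by
  obtain ⟨hγ, -⟩ := hext
  obtain ⟨-, -, hrep⟩ := hpair
  have hνfin : ν Set.univ < ⊤ := by
    have h := (hrep 0 0 (by norm_num)).2.1
    simp only [zpow_zero, one_mul] at h
    rcases (integrable_const_iff (c := (1:ℂ))).mp h with h1 | h1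
    · exact absurd h1 one_ne_zero
    · exact h1.measure_univ_lt_top
  intro m n
  set f : ℂ → ℂ := fun z => z ^ m * (starRingEnd ℂ z) ^ n with hf
  have hmn := hrep m n (by positivity)
  simp only [zpow_natCast] at hmn
  obtain ⟨hμint, hνint, hΓ⟩ := hmn
  have hdint : Integrable f (Measure.dirac (0 : ℂ)) :=
    (integrable_const (f 0)).congr (ae_eq_dirac f).symm
  have hsint : Integrable f (ν Set.univ • Measure.dirac (0 : ℂ)) :=
    hdint.smul_measure hνfin.ne
  have hint : Integrable f (μ + ν Set.univ • Measure.dirac (0 : ℂ)) :=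
    hμint.add_measure hsint
  refine ⟨hint, ?_⟩
  rw [← hγ m n, hΓ, integral_add_measure hμint hsint, integral_smul_measure,
    integral_dirac]
  congr 1
  by_cases h0 : (m : ℤ) + (n : ℤ) = 0
  · have hm : m = 0 := by omega
    have hn : n = 0 := by omega
    subst hm; subst hn
    simp [hf, integral_const, smul_eq_mul]
    rfl
  · rw [if_neg h0]
    have : f 0 = 0 := by
      rcases Nat.eq_zero_or_pos m with hm | hm
      · have hn : 0 < n := by omega
        simp [hf, zero_pow hn.ne', map_zero]
      · simp [hf, zero_pow hm.ne']
    rw [show (0:ℂ) ^ m * (starRingEnd ℂ) 0 ^ n = 0 from this, smul_zero]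
end

section
/- Let γ be a complex moment sequence. If for any representing pairs (μ₁,ν₁) and (μ₂,ν₂) of positive definite extensions Γ₁, Γ₂ of γ on N_+ one always has μ₁ = μ₂, then γ is determinate (has a unique representing measure). -/
open MeasureTheory
open scoped ComplexOrder

/- ### Auxiliary lemmas -/

lemma meas_zpow' (m : ℤ) : Measurable fun z : ℂ => z ^ m := by
  cases m with
  | ofNat k => simpa using (measurable_id.pow_const k)
  | negSucc k => simpa [zpow_negSucc] using ((measurable_id (α := ℂ)).pow_const (k+1))

lemma meas_conj' : Measurable (starRingEnd ℂ) := continuous_star.measurable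

lemma meas_f' (m n : ℤ) : Measurable fun z : ℂ => z ^ m * (starRingEnd ℂ z) ^ n :=
  (meas_zpow' m).mul ((meas_zpow' n).comp meas_conj')

lemma integrable_smul_dirac' (f : ℂ → ℂ) (hf : Measurable f) (c : ENNReal) (hc : c ≠ ⊤)
    (a : ℂ) : Integrable f (c • Measure.dirac a) := by
  refine ⟨hf.aestronglyMeasurable, ?_⟩
  show (∫⁻ z, ‖f z‖₊ ∂(c • Measure.dirac a)) < ⊤
  rw [lintegral_smul_measure, lintegral_dirac' _ hf.nnnorm.coe_nnreal_ennreal]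
  exact ENNReal.mul_lt_top hc.lt_top (by simp)

lemma finite_of_rep' {γ : ℕ → ℕ → ℂ} {μ : Measure ℂ} (hμ : IsRepMeasure γ μ) :
    IsFiniteMeasure μ := by
  have h := (hμ 0 0).1
  simp only [pow_zero, one_mul] at h
  rw [integrable_const_iff] at h
  rcases h with h | h
  · exact ⟨by simp at h⟩
  · exact h

lemma integ_zpow' {γ : ℕ → ℕ → ℂ} {μ : Measure ℂ} (hμ : IsRepMeasure γ μ) (m n : ℤ)
    (hmn : 0 ≤ m + n) : Integrable (fun z : ℂ => z ^ m * (starRingEnd ℂ z) ^ n) μ := by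
  haveI := finite_of_rep' hμ
  set k := (m + n).toNat with hk
  have hkk : (k : ℤ) = m + n := Int.toNat_of_nonneg hmn
  have hint : Integrable (fun z : ℂ => 1 + ‖z ^ k * (starRingEnd ℂ z) ^ k‖) μ :=
    (integrable_const 1).add (hμ k k).1.norm
  refine Integrable.mono hint (meas_f' m n).aestronglyMeasurable (Filter.Eventually.of_forall ?_)
  intro z
  have hnn : (0:ℝ) ≤ 1 + ‖z ^ k * (starRingEnd ℂ) z ^ k‖ := by positivity
  rw [Real.norm_of_nonneg hnn]
  have hzk : ‖z ^ k * (starRingEnd ℂ) z ^ k‖ = ‖z‖ ^ k * ‖z‖ ^ k := by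
    rw [norm_mul, norm_pow, norm_pow]
    simp
  rcases eq_or_ne z 0 with rfl | hz
  · rcases eq_or_ne m 0 with rfl | hm
    · rcases eq_or_ne n 0 with rfl | hn
      · simp; positivity
      · simp [zero_zpow n hn]; positivity
    · simp [zero_zpow m hm]; positivity
  · have h1 : ‖z ^ m * (starRingEnd ℂ) z ^ n‖ = ‖z‖ ^ k := by
      rw [norm_mul, norm_zpow]
      have : ‖(starRingEnd ℂ) z ^ n‖ = ‖z‖ ^ n := by
        rw [norm_zpow]; simp
      rw [this, ← zpow_add₀ (norm_ne_zero_iff.mpr hz), ← hkk, zpow_natCast]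
    rw [h1, hzk]
    rcases le_or_gt ‖z‖ 1 with h | h
    · have : ‖z‖ ^ k ≤ 1 := pow_le_one₀ (norm_nonneg z) h
      nlinarith [pow_nonneg (norm_nonneg z) k]
    · have h1le : (1:ℝ) ≤ ‖z‖ ^ k := one_le_pow₀ h.le
      nlinarith

/-- The canonical positive definite extension built from a representing measure. -/
noncomputable def GammaOf (μ : Measure ℂ) : ℤ → ℤ → ℂ := fun m n =>
  (∫ z : ℂ, z ^ m * (starRingEnd ℂ z) ^ n ∂(μ.restrict {0}ᶜ)) +
    if m + n = 0 then ((μ {0}).toReal : ℂ) else 0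

lemma conj_zpow'' (z : ℂ) (n : ℤ) : starRingEnd ℂ (z ^ n) = (starRingEnd ℂ z) ^ n :=
  map_zpow₀ (starRingEnd ℂ) z n

lemma repPair_of {γ : ℕ → ℕ → ℂ} {μ : Measure ℂ} (hμ : IsRepMeasure γ μ) :
    IsRepPair (GammaOf μ) (μ.restrict {0}ᶜ) (μ {0} • Measure.dirac 1) := by
  haveI := finite_of_rep' hμ
  refine ⟨?_, ?_, ?_⟩
  · rw [Measure.restrict_apply (measurableSet_singleton 0)]
    simp
  · rw [Measure.smul_apply, smul_eq_mul,
      Measure.dirac_apply' _ (Metric.isClosed_sphere.measurableSet.compl)]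
    have h1 : (1:ℂ) ∈ Metric.sphere (0:ℂ) 1 := by simp
    simp [Set.indicator_of_notMem (Set.notMem_compl_iff.mpr h1)]
  · intro m n hmn
    refine ⟨(integ_zpow' hμ m n hmn).restrict,
      integrable_smul_dirac' _ (meas_f' m n) _ (measure_ne_top μ _) 1, ?_⟩
    have hν : (∫ z : ℂ, z ^ m * (starRingEnd ℂ z) ^ n ∂(μ {0} • Measure.dirac 1))
        = ((μ {0}).toReal : ℂ) := by
      rw [integral_smul_measure, integral_dirac]
      simp
    rw [hν, GammaOf]

lemma ext_of {γ : ℕ → ℕ → ℂ} {μ : Measure ℂ} (hμ : IsRepMeasure γ μ) (m n : ℕ) :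
    GammaOf μ (m : ℤ) (n : ℤ) = γ m n := by
  haveI := finite_of_rep' hμ
  have hfun : (fun z : ℂ => z ^ (m:ℤ) * (starRingEnd ℂ z) ^ (n:ℤ))
      = fun z : ℂ => z ^ m * (starRingEnd ℂ z) ^ n := by
    funext z; rw [zpow_natCast, zpow_natCast]
  have hsplit : (∫ z : ℂ, z ^ m * (starRingEnd ℂ z) ^ n ∂μ)
      = (∫ z : ℂ, z ^ m * (starRingEnd ℂ z) ^ n ∂(μ.restrict {0}ᶜ))
        + ∫ z : ℂ, z ^ m * (starRingEnd ℂ z) ^ n ∂(μ.restrict {0}) := by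
    conv_lhs => rw [← Measure.restrict_compl_add_restrict (μ := μ) (measurableSet_singleton 0)]
    exact integral_add_measure ((hμ m n).1.restrict) ((hμ m n).1.restrict)
  have hsing : (∫ z : ℂ, z ^ m * (starRingEnd ℂ z) ^ n ∂(μ.restrict {0}))
      = if (m:ℤ) + (n:ℤ) = 0 then ((μ {0}).toReal : ℂ) else 0 := by
    rw [Measure.restrict_singleton, integral_smul_measure, integral_dirac]
    by_cases hm : m = 0
    · by_cases hn : n = 0
      · subst hm; subst hn; simp
      · subst hm; simp [zero_pow hn, hn]
    · have : ¬ ((m:ℤ) + (n:ℤ) = 0) := by omega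
      simp [zero_pow hm, this]
  rw [GammaOf, hfun, (hμ m n).2, hsplit, hsing]

lemma posdef_of {γ : ℕ → ℕ → ℂ} {μ : Measure ℂ} (hμ : IsRepMeasure γ μ) :
    IsPosDefExt γ (GammaOf μ) := by
  haveI := finite_of_rep' hμ
  refine ⟨fun m n => ext_of hμ m n, ?_⟩
  intro Λ hΛ lam
  set μ' := μ.restrict {0}ᶜ with hμ'
  set c := (μ {0}).toReal with hcdef
  have hc : 0 ≤ c := ENNReal.toReal_nonneg
  have hsum : (∑ p ∈ Λ, ∑ q ∈ Λ, lam p * starRingEnd ℂ (lam q) *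
        GammaOf μ (p.1 + q.2) (p.2 + q.1))
      = (∑ p ∈ Λ, ∑ q ∈ Λ, lam p * starRingEnd ℂ (lam q) *
          ∫ z : ℂ, z ^ (p.1 + q.2) * (starRingEnd ℂ z) ^ (p.2 + q.1) ∂μ')
        + ∑ p ∈ Λ, ∑ q ∈ Λ, lam p * starRingEnd ℂ (lam q) *
          (if (p.1 + q.2) + (p.2 + q.1) = 0 then (c : ℂ) else 0) := by
    rw [← Finset.sum_add_distrib]
    refine Finset.sum_congr rfl fun p _ => ?_
    rw [← Finset.sum_add_distrib]
    exact Finset.sum_congr rfl fun q _ => by rw [GammaOf]; ring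
  rw [hsum]
  have partA : 0 ≤ ∑ p ∈ Λ, ∑ q ∈ Λ, lam p * starRingEnd ℂ (lam q) *
      ∫ z : ℂ, z ^ (p.1 + q.2) * (starRingEnd ℂ z) ^ (p.2 + q.1) ∂μ' := by
    set S : ℂ → ℂ := fun z => ∑ p ∈ Λ, lam p * (z ^ p.1 * (starRingEnd ℂ z) ^ p.2) with hS
    have hInt : ∀ p ∈ Λ, ∀ q ∈ Λ, Integrable
        (fun z : ℂ => lam p * starRingEnd ℂ (lam q) *
          (z ^ (p.1 + q.2) * (starRingEnd ℂ z) ^ (p.2 + q.1))) μ' := by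
      intro p hp q hq
      have h1 := hΛ p hp; have h2 := hΛ q hq
      exact ((integ_zpow' hμ _ _ (by omega)).restrict).const_mul _
    have key : (∑ p ∈ Λ, ∑ q ∈ Λ, lam p * starRingEnd ℂ (lam q) *
          ∫ z : ℂ, z ^ (p.1 + q.2) * (starRingEnd ℂ z) ^ (p.2 + q.1) ∂μ')
        = ∫ z : ℂ, S z * starRingEnd ℂ (S z) ∂μ' := by
      have hae : ∀ᵐ z ∂μ', S z * starRingEnd ℂ (S z)
          = ∑ p ∈ Λ, ∑ q ∈ Λ, lam p * starRingEnd ℂ (lam q) *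
            (z ^ (p.1 + q.2) * (starRingEnd ℂ z) ^ (p.2 + q.1)) := by
        refine (ae_restrict_mem (measurableSet_singleton (0:ℂ)).compl).mono fun z hz => ?_
        have hz0 : z ≠ 0 := hz
        have hcz : starRingEnd ℂ z ≠ 0 := by simpa using hz0
        have hconjS : starRingEnd ℂ (S z)
            = ∑ q ∈ Λ, starRingEnd ℂ (lam q) * ((starRingEnd ℂ z) ^ q.1 * z ^ q.2) := by
          rw [hS, map_sum]
          refine Finset.sum_congr rfl fun q _ => ?_
          rw [map_mul, map_mul, conj_zpow'', conj_zpow'', Complex.conj_conj]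
        rw [hS, hconjS, Finset.sum_mul_sum]
        refine Finset.sum_congr rfl fun p _ => Finset.sum_congr rfl fun q _ => ?_
        rw [zpow_add₀ hz0, zpow_add₀ hcz]
        ring
      rw [integral_congr_ae hae, integral_finset_sum _ (fun p hp => integrable_finset_sum _
        (fun q hq => hInt p hp q hq))]
      refine Finset.sum_congr rfl fun p hp => ?_
      rw [integral_finset_sum _ (fun q hq => hInt p hp q hq)]
      exact Finset.sum_congr rfl fun q hq => (integral_const_mul _ _).symm
    rw [key]
    have : (∫ z : ℂ, S z * starRingEnd ℂ (S z) ∂μ')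
        = ((∫ z : ℂ, Complex.normSq (S z) ∂μ' : ℝ) : ℂ) := by
      rw [show (fun z : ℂ => S z * starRingEnd ℂ (S z))
          = fun z : ℂ => ((Complex.normSq (S z) : ℝ) : ℂ) from
        funext fun z => Complex.mul_conj (S z)]
      exact integral_ofReal
    rw [this]
    exact Complex.zero_le_real.2 (integral_nonneg fun z => Complex.normSq_nonneg _)
  have partB : 0 ≤ ∑ p ∈ Λ, ∑ q ∈ Λ, lam p * starRingEnd ℂ (lam q) *
      (if (p.1 + q.2) + (p.2 + q.1) = 0 then (c : ℂ) else 0) := by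
    set T : ℂ := ∑ p ∈ Λ, lam p * (if p.1 + p.2 = 0 then (1:ℂ) else 0) with hT
    have key : (∑ p ∈ Λ, ∑ q ∈ Λ, lam p * starRingEnd ℂ (lam q) *
          (if (p.1 + q.2) + (p.2 + q.1) = 0 then (c : ℂ) else 0))
        = T * starRingEnd ℂ T * c := by
      have hconjT : starRingEnd ℂ T
          = ∑ q ∈ Λ, starRingEnd ℂ (lam q) * (if q.1 + q.2 = 0 then (1:ℂ) else 0) := by
        rw [hT, map_sum]
        refine Finset.sum_congr rfl fun q _ => ?_
        rw [map_mul]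
        congr 1
        split_ifs <;> simp
      rw [hconjT, hT, Finset.sum_mul_sum, Finset.sum_mul]
      refine Finset.sum_congr rfl fun p hp => ?_
      rw [Finset.sum_mul]
      refine Finset.sum_congr rfl fun q hq => ?_
      have h1 := hΛ p hp; have h2 := hΛ q hq
      have hiff : ((p.1 + q.2) + (p.2 + q.1) = 0) ↔ (p.1 + p.2 = 0 ∧ q.1 + q.2 = 0) := by omega
      by_cases ha : p.1 + p.2 = 0 <;> by_cases hb : q.1 + q.2 = 0 <;>
        simp [ha, hb, hiff]
    rw [key]
    have : T * starRingEnd ℂ T * c = ((Complex.normSq T * c : ℝ) : ℂ) := by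
      rw [Complex.mul_conj]; push_cast; ring
    rw [this]
    exact Complex.zero_le_real.2 (mul_nonneg (Complex.normSq_nonneg _) hc)
  exact add_nonneg partA partB

/-- If any two representing pairs of positive definite extensions of a complex moment
sequence `γ` on `N₊` have the same first component, then `γ` is determinate. -/
theorem stmt8 (γ : ℕ → ℕ → ℂ) (μ : Measure ℂ) (hμ : IsRepMeasure γ μ)
    (h : ∀ (Γ₁ Γ₂ : ℤ → ℤ → ℂ) (μ₁ ν₁ μ₂ ν₂ : Measure ℂ),
      IsPosDefExt γ Γ₁ → IsPosDefExt γ Γ₂ →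
      IsRepPair Γ₁ μ₁ ν₁ → IsRepPair Γ₂ μ₂ ν₂ → μ₁ = μ₂) :
    ∀ μ₁ μ₂ : Measure ℂ, IsRepMeasure γ μ₁ → IsRepMeasure γ μ₂ → μ₁ = μ₂ := by
  intro μ₁ μ₂ h₁ h₂
  haveI := finite_of_rep' h₁
  haveI := finite_of_rep' h₂
  have hres : μ₁.restrict {0}ᶜ = μ₂.restrict {0}ᶜ :=
    h (GammaOf μ₁) (GammaOf μ₂) _ _ _ _ (posdef_of h₁) (posdef_of h₂)
      (repPair_of h₁) (repPair_of h₂)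
  -- total masses agree
  have htot : μ₁ Set.univ = μ₂ Set.univ := by
    have e1 : (γ 0 0 : ℂ) = ((μ₁ Set.univ).toReal : ℂ) := by
      have := (h₁ 0 0).2; simpa [integral_const, measureReal_def] using this
    have e2 : (γ 0 0 : ℂ) = ((μ₂ Set.univ).toReal : ℂ) := by
      have := (h₂ 0 0).2; simpa [integral_const, measureReal_def] using this
    have : (μ₁ Set.univ).toReal = (μ₂ Set.univ).toReal := by
      have := e1.symm.trans e2
      exact_mod_cast this
    exact (ENNReal.toReal_eq_toReal_iff' (measure_ne_top _ _) (measure_ne_top _ _)).mp this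
  have hcompl : μ₁ {0}ᶜ = μ₂ {0}ᶜ := by
    have := congrArg (fun m : Measure ℂ => m Set.univ) hres
    simpa [Measure.restrict_apply_univ] using this
  have h0 : μ₁ {0} = μ₂ {0} := by
    have hu1 : μ₁ {0} + μ₁ {0}ᶜ = μ₁ Set.univ := by
      rw [← measure_add_measure_compl (measurableSet_singleton 0)]
    have hu2 : μ₂ {0} + μ₂ {0}ᶜ = μ₂ Set.univ := by
      rw [← measure_add_measure_compl (measurableSet_singleton 0)]
    have := hu1.trans (htot.trans hu2.symm)
    rw [hcompl] at this
    exact WithTop.add_right_cancel (measure_ne_top _ _) this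
  calc μ₁ = μ₁.restrict {0}ᶜ + μ₁.restrict {0} :=
        (Measure.restrict_compl_add_restrict (measurableSet_singleton 0)).symm
    _ = μ₂.restrict {0}ᶜ + μ₂.restrict {0} := by
        rw [hres, Measure.restrict_singleton, Measure.restrict_singleton, h0]
    _ = μ₂ := Measure.restrict_compl_add_restrict (measurableSet_singleton 0)
end

section
/- If γ is a determinate complex moment sequence and (μ₁,ν₁), (μ₂,ν₂) are representing pairs for positive definite extensions Γ₁, Γ₂ of γ on N_+, then μ₁ = μ₂ and ν₁(𝕋) = ν₂(𝕋). -/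
open MeasureTheory
open scoped ComplexOrder

lemma integrable_dirac_aux (f : ℂ → ℂ) (hf : Measurable f) (a : ℂ) :
    Integrable f (Measure.dirac a) := by
  refine ⟨hf.aestronglyMeasurable, ?_⟩
  rw [HasFiniteIntegral, lintegral_dirac]
  exact ENNReal.coe_lt_top

lemma key (γ : ℕ → ℕ → ℂ) (Γ : ℤ → ℤ → ℂ) (μ' ν' : Measure ℂ)
    (hext : IsPosDefExt γ Γ) (hpair : IsRepPair Γ μ' ν') :
    ν' Set.univ ≠ ⊤ ∧ IsRepMeasure γ (μ' + (ν' Set.univ) • Measure.dirac 0) := by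
  obtain ⟨hμ0, hνs, hmom⟩ := hpair
  have h00 := hmom 0 0 (by norm_num)
  have hν1 : Integrable (fun _ : ℂ => (1:ℂ)) ν' := by
    simpa using h00.2.1
  have hνfin : ν' Set.univ ≠ ⊤ := by
    rcases integrable_const_iff.mp hν1 with h | h
    · simp at h
    · exact h.measure_univ_lt_top.ne
  refine ⟨hνfin, ?_⟩
  intro m n
  have hm := hmom (m : ℤ) (n : ℤ) (by positivity)
  simp only [zpow_natCast] at hm
  have hmeas : Measurable (fun z : ℂ => z ^ m * (starRingEnd ℂ z) ^ n) :=
    ((continuous_pow m).mul ((continuous_star.pow n))).measurable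
  have hint2 : Integrable (fun z : ℂ => z ^ m * (starRingEnd ℂ z) ^ n)
      ((ν' Set.univ) • Measure.dirac 0) :=
    (integrable_dirac_aux _ hmeas 0).smul_measure hνfin
  refine ⟨hm.1.add_measure hint2, ?_⟩
  rw [integral_add_measure hm.1 hint2, integral_smul_measure, integral_dirac]
  rw [← hext.1 m n, hm.2.2]
  congr 1
  by_cases h : m = 0 ∧ n = 0
  · obtain ⟨rfl, rfl⟩ := h
    simp [integral_const]
    rfl
  · have hmn : ((m : ℤ) + n ≠ 0) := by
      intro hc
      apply h
      omega
    rw [if_neg hmn]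
    have : (0:ℂ) ^ m * (starRingEnd ℂ 0) ^ n = 0 := by
      rcases Nat.eq_zero_or_pos m with hm0 | hmpos
      · subst hm0
        have hn : n ≠ 0 := fun hn0 => h ⟨rfl, hn0⟩
        simp [zero_pow hn]
      · simp [zero_pow hmpos.ne']
    rw [this, smul_zero]

/-- If `γ` is a determinate complex moment sequence and `(μ₁,ν₁)`, `(μ₂,ν₂)` are representing
pairs for positive definite extensions `Γ₁`, `Γ₂` of `γ` on `N₊`, then `μ₁ = μ₂` and
`ν₁(𝕋) = ν₂(𝕋)`. -/
theorem stmt9 (γ : ℕ → ℕ → ℂ) (μ : Measure ℂ) (hμ : IsRepMeasure γ μ)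
    (hdet : ∀ μ₁ μ₂ : Measure ℂ, IsRepMeasure γ μ₁ → IsRepMeasure γ μ₂ → μ₁ = μ₂)
    (Γ₁ Γ₂ : ℤ → ℤ → ℂ) (μ₁ ν₁ μ₂ ν₂ : Measure ℂ)
    (hext₁ : IsPosDefExt γ Γ₁) (hext₂ : IsPosDefExt γ Γ₂)
    (hpair₁ : IsRepPair Γ₁ μ₁ ν₁) (hpair₂ : IsRepPair Γ₂ μ₂ ν₂) :
    μ₁ = μ₂ ∧ ν₁ Set.univ = ν₂ Set.univ := by
  obtain ⟨hfin₁, hrep₁⟩ := key γ Γ₁ μ₁ ν₁ hext₁ hpair₁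
  obtain ⟨hfin₂, hrep₂⟩ := key γ Γ₂ μ₂ ν₂ hext₂ hpair₂
  have hσ : μ₁ + (ν₁ Set.univ) • Measure.dirac 0 = μ₂ + (ν₂ Set.univ) • Measure.dirac 0 :=
    hdet _ _ hrep₁ hrep₂
  have hμeq : μ₁ = μ₂ := by
    ext s hs
    have hds : MeasurableSet (s \ {0}) := hs.diff (measurableSet_singleton 0)
    have h1 : ((μ₁ + (ν₁ Set.univ) • Measure.dirac 0 : Measure ℂ)) (s \ {0}) = μ₁ s := by
      rw [Measure.add_apply, Measure.smul_apply, Measure.dirac_apply' _ hds]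
      have : (0:ℂ) ∉ s \ {0} := fun h => h.2 rfl
      rw [Set.indicator_of_notMem this, smul_zero, add_zero,
        measure_diff_null (hpair₁.1)]
    have h2 : ((μ₂ + (ν₂ Set.univ) • Measure.dirac 0 : Measure ℂ)) (s \ {0}) = μ₂ s := by
      rw [Measure.add_apply, Measure.smul_apply, Measure.dirac_apply' _ hds]
      have : (0:ℂ) ∉ s \ {0} := fun h => h.2 rfl
      rw [Set.indicator_of_notMem this, smul_zero, add_zero,
        measure_diff_null (hpair₂.1)]
    rw [← h1, hσ, h2]
  refine ⟨hμeq, ?_⟩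
  have h0 : ((μ₁ + (ν₁ Set.univ) • Measure.dirac 0 : Measure ℂ)) {0} =
      ((μ₂ + (ν₂ Set.univ) • Measure.dirac 0 : Measure ℂ)) {0} := by rw [hσ]
  simpa [Measure.add_apply, Measure.smul_apply, Measure.dirac_apply,
    hpair₁.1, hpair₂.1] using h0
end

section
/- Let γ be a (k,l)-flat complex moment sequence with l > 0 and k ≥ 0, and let μ be a representing measure for γ. Then μ is supported in the set {z ∈ ℂ : z^l = z̄^k}. -/
open MeasureTheory

/-- `γ` is `(k,l)`-flat: `γ_{m,n} = γ_{m',n'}` whenever `km + ln = km' + ln'`. -/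
def IsFlat (k l : ℤ) (γ : ℕ → ℕ → ℂ) : Prop :=
  ∀ m n m' n' : ℕ, k * m + l * n = k * m' + l * n' → γ m n = γ m' n'

/-- If `γ` is a `(k,l)`-flat complex moment sequence with `k ≥ 0` and `l > 0`, then every
representing measure for `γ` is supported in `{z : z^l = z̄^k}`. -/
theorem stmt11 (k l : ℤ) (hk : 0 ≤ k) (hl : 0 < l) (γ : ℕ → ℕ → ℂ)
    (hflat : IsFlat k l γ) (μ : Measure ℂ) (hμ : IsRepMeasure γ μ) :
    μ {z : ℂ | z ^ l = (starRingEnd ℂ z) ^ k}ᶜ = 0 := by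
  set K := k.toNat with hKdef
  set L := l.toNat with hLdef
  have hkK : (K : ℤ) = k := Int.toNat_of_nonneg hk
  have hlL : (L : ℤ) = l := Int.toNat_of_nonneg hl.le
  set c := starRingEnd ℂ with hc
  obtain ⟨hI1, hγ1⟩ := hμ L L
  obtain ⟨hI2, hγ2⟩ := hμ K K
  obtain ⟨hI3, hγ3⟩ := hμ (L + K) 0
  obtain ⟨hI4, hγ4⟩ := hμ 0 (L + K)
  have hf1 : γ L L = γ 0 (L + K) := by
    apply hflat
    rw [← hkK, ← hlL]; push_cast; ring
  have hf2 : γ K K = γ (L + K) 0 := by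
    apply hflat
    rw [← hkK, ← hlL]; push_cast; ring
  set g : ℂ → ℂ := fun z =>
    z ^ L * c z ^ L + z ^ K * c z ^ K - z ^ (L + K) * c z ^ 0 - z ^ 0 * c z ^ (L + K)
    with hg
  have hIntg : Integrable g μ := ((hI1.add hI2).sub hI3).sub hI4
  have hIg : ∫ z, g z ∂μ = 0 := by
    have e1 := integral_add hI1 hI2
    have e2 := integral_sub (hI1.add hI2) hI3
    have e3 := integral_sub ((hI1.add hI2).sub hI3) hI4
    simp only [Pi.add_apply, Pi.sub_apply] at e1 e2 e3
    rw [hg]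
    simp only []
    rw [e3, e2, e1, ← hγ1, ← hγ2, ← hγ3, ← hγ4, hf1, hf2]
    ring
  have hkey : ∀ z : ℂ, g z = ((Complex.normSq (z ^ L - c z ^ K) : ℝ) : ℂ) := by
    intro z
    rw [← Complex.mul_conj (z ^ L - c z ^ K)]
    simp only [hg, map_sub, map_pow, Complex.conj_conj, pow_zero, hc]
    ring
  have hIntr : Integrable (fun z => Complex.normSq (z ^ L - c z ^ K)) μ := by
    have h := hIntg.re
    refine h.congr (Filter.Eventually.of_forall fun z => ?_)
    simp only [RCLike.re_to_complex]
    rw [hkey z, Complex.ofReal_re]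
  have hIr : ∫ z, Complex.normSq (z ^ L - c z ^ K) ∂μ = 0 := by
    have h2 : ∫ z, RCLike.re (g z) ∂μ = RCLike.re (∫ z, g z ∂μ) := integral_re hIntg
    rw [hIg, map_zero] at h2
    have h3 : ∫ z, Complex.normSq (z ^ L - c z ^ K) ∂μ = ∫ z, RCLike.re (g z) ∂μ :=
      integral_congr_ae (Filter.Eventually.of_forall fun z => by
        show Complex.normSq (z ^ L - c z ^ K) = RCLike.re (g z)
        rw [hkey z]; simp [RCLike.re_to_complex])
    rw [h3, h2]
  have hae : ∀ᵐ z ∂μ, Complex.normSq (z ^ L - c z ^ K) = 0 := by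
    have := (integral_eq_zero_iff_of_nonneg
      (fun z => Complex.normSq_nonneg _) hIntr).mp hIr
    filter_upwards [this] with z hz using hz
  rw [Set.compl_setOf, ← ae_iff]
  filter_upwards [hae] with z hz
  have h0 : z ^ L - c z ^ K = 0 := Complex.normSq_eq_zero.mp hz
  have h1 : z ^ L = c z ^ K := sub_eq_zero.mp h0
  rw [← hkK, ← hlL, zpow_natCast, zpow_natCast]
  exact h1
end

section
/- Let γ be a (k,l)-flat complex moment sequence with k ≥ 0 and l < 0, and let μ be a representing measure for γ. Then μ is supported in the unit circle 𝕋. -/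
open MeasureTheory

/-- If `γ` is a `(k,l)`-flat complex moment sequence with `k ≥ 0` and `l < 0`, then every
representing measure for `γ` is supported in the unit circle `𝕋`. -/
theorem stmt12 (k l : ℤ) (hk : 0 ≤ k) (hl : l < 0) (γ : ℕ → ℕ → ℂ)
    (hflat : IsFlat k l γ) (μ : Measure ℂ) (hμ : IsRepMeasure γ μ) :
    μ (Metric.sphere (0 : ℂ) 1)ᶜ = 0 := by
  obtain ⟨a, rfl⟩ : ∃ a : ℕ, k = (a : ℤ) := ⟨k.toNat, (Int.toNat_of_nonneg hk).symm⟩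
  obtain ⟨b, rfl⟩ : ∃ b : ℕ, l = -(b : ℤ) := ⟨(-l).toNat, by omega⟩
  have hb1 : 1 ≤ b := by omega
  set w : ℂ → ℂ := fun z => z ^ b * (starRingEnd ℂ z) ^ a - 1 with hw
  have hkey : (fun z : ℂ => w z * (starRingEnd ℂ) (w z)) =
      fun z : ℂ => z ^ (a + b) * (starRingEnd ℂ z) ^ (a + b)
        - z ^ b * (starRingEnd ℂ z) ^ a - z ^ a * (starRingEnd ℂ z) ^ b + 1 := by
    funext z
    simp only [hw, map_sub, map_mul, map_pow, map_one, Complex.conj_conj, pow_add]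
    ring
  have h1 := hμ (a + b) (a + b)
  have h2 := hμ b a
  have h3 := hμ a b
  have h4 := hμ 0 0
  simp only [pow_zero, mul_one] at h4
  have i12 : Integrable (fun z : ℂ => z ^ (a + b) * (starRingEnd ℂ z) ^ (a + b)
      - z ^ b * (starRingEnd ℂ z) ^ a) μ := h1.1.sub h2.1
  have i123 : Integrable (fun z : ℂ => z ^ (a + b) * (starRingEnd ℂ z) ^ (a + b)
      - z ^ b * (starRingEnd ℂ z) ^ a - z ^ a * (starRingEnd ℂ z) ^ b) μ := i12.sub h3.1
  have hint : Integrable (fun z : ℂ => w z * (starRingEnd ℂ) (w z)) μ := by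
    rw [hkey]
    exact i123.add h4.1
  have hI : ∫ z : ℂ, w z * (starRingEnd ℂ) (w z) ∂μ = 0 := by
    rw [hkey, integral_add i123 h4.1, integral_sub i12 h3.1, integral_sub h1.1 h2.1]
    rw [← h1.2, ← h2.2, ← h3.2, ← h4.2]
    have e1 : γ (a + b) (a + b) = γ a b := by
      apply hflat
      push_cast
      ring
    have e2 : γ b a = γ 0 0 := by
      apply hflat
      push_cast
      ring
    rw [e1, e2]
    ring
  have hre : ∫ z : ℂ, (Complex.normSq (w z) : ℝ) ∂μ = 0 := by
    have h := integral_re hint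
    rw [hI] at h
    simp only [Complex.mul_conj, RCLike.re_to_complex, Complex.ofReal_re, map_zero] at h
    exact h
  have hintR : Integrable (fun z : ℂ => Complex.normSq (w z)) μ := by
    have := hint.re
    convert this using 1
    funext z
    rw [Complex.mul_conj]
    simp
  have hae : (fun z : ℂ => Complex.normSq (w z)) =ᵐ[μ] 0 := by
    rw [← integral_eq_zero_iff_of_nonneg (fun z => Complex.normSq_nonneg _) hintR]
    exact hre
  have hfin : ∀ᵐ z ∂μ, z ∈ Metric.sphere (0 : ℂ) 1 := by
    refine hae.mono fun z hz => ?_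
    simp only [Pi.zero_apply, Complex.normSq_eq_zero, hw, sub_eq_zero] at hz
    have hnorm : ‖z‖ ^ (a + b) = 1 := by
      have := congrArg norm hz
      simpa [pow_add, norm_pow, mul_comm] using this
    have h0 : 0 ≤ ‖z‖ := norm_nonneg z
    have : ‖z‖ = 1 := by
      rcases (pow_eq_one_iff_cases.mp hnorm) with h | h | h
      · omega
      · exact h
      · nlinarith [h.1]
    simp [Metric.mem_sphere, Complex.dist_eq, this]
  rw [ae_iff] at hfin
  exact hfin
end

section
/- Let s = {s_n}_{n≥0} be a sequence of real numbers and define γ_{m,n} = s_{m+n} for m,n ≥ 0. Then s is a Hamburger moment sequence if and only if γ is a complex moment sequence; moreover s is determinate if and only if γ is determinate. -/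
open MeasureTheory

/-- `τ` is a representing measure for the Hamburger moment sequence `s`. -/
def IsHamburgerRep (s : ℕ → ℝ) (τ : Measure ℝ) : Prop :=
  ∀ n : ℕ, Integrable (fun x : ℝ => x ^ n) τ ∧ s n = ∫ x : ℝ, x ^ n ∂τ

lemma aux_forward (s : ℕ → ℝ) (γ : ℕ → ℕ → ℂ) (hγ : ∀ m n : ℕ, γ m n = (s (m + n) : ℂ))
    (τ : Measure ℝ) (hτ : IsHamburgerRep s τ) :
    IsRepMeasure γ (Measure.map (fun x : ℝ => (x : ℂ)) τ) := by
  intro m n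
  have hmeas : AEMeasurable (fun x : ℝ => (x : ℂ)) τ :=
    Complex.measurable_ofReal.aemeasurable
  have hreal : ∀ x : ℝ, ((x : ℂ)) ^ m * (starRingEnd ℂ (x : ℂ)) ^ n = ((x ^ (m + n) : ℝ) : ℂ) := by
    intro x
    simp [Complex.conj_ofReal, pow_add, ← Complex.ofReal_pow]
  have hsm : AEStronglyMeasurable (fun z : ℂ => z ^ m * (starRingEnd ℂ z) ^ n)
      (Measure.map (fun x : ℝ => (x : ℂ)) τ) := by
    apply Continuous.aestronglyMeasurable
    exact (continuous_pow m).mul ((Complex.continuous_conj).pow n)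
  constructor
  · rw [integrable_map_measure hsm hmeas]
    have : (fun z : ℂ => z ^ m * (starRingEnd ℂ z) ^ n) ∘ (fun x : ℝ => (x : ℂ))
        = fun x : ℝ => ((x ^ (m + n) : ℝ) : ℂ) := by
      funext x; simp only [Function.comp_apply]; exact hreal x
    rw [this]
    exact (hτ (m + n)).1.ofReal
  · rw [integral_map hmeas hsm]
    have : ∫ x : ℝ, ((x : ℂ)) ^ m * (starRingEnd ℂ (x : ℂ)) ^ n ∂τ
        = ∫ x : ℝ, ((x ^ (m + n) : ℝ) : ℂ) ∂τ := by
      exact integral_congr_ae (Filter.Eventually.of_forall fun x => hreal x)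
    rw [this, hγ m n, (hτ (m + n)).2]
    exact (integral_ofReal (𝕜 := ℂ)).symm

lemma aux_ae_real (s : ℕ → ℝ) (γ : ℕ → ℕ → ℂ) (hγ : ∀ m n : ℕ, γ m n = (s (m + n) : ℂ))
    (μ : Measure ℂ) (hμ : IsRepMeasure γ μ) :
    ∀ᵐ z ∂μ, z.im = 0 := by
  -- use ∫ normSq z - (z^2).re dμ = s 2 - s 2 = 0 and normSq z - (z^2).re = 2 (im z)^2
  have h11 := hμ 1 1
  have h20 := hμ 2 0
  have e11 : (fun z : ℂ => z ^ 1 * (starRingEnd ℂ z) ^ 1) = fun z : ℂ => ((Complex.normSq z : ℝ) : ℂ) := by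
    funext z; simp [Complex.mul_conj]
  have e20 : (fun z : ℂ => z ^ 2 * (starRingEnd ℂ z) ^ 0) = fun z : ℂ => z ^ 2 := by
    funext z; simp
  rw [e11] at h11
  rw [e20] at h20
  have hns : Integrable (fun z : ℂ => Complex.normSq z) μ := by
    have := h11.1.re
    simpa using this
  have hre : Integrable (fun z : ℂ => (z ^ 2).re) μ := by
    have := h20.1.re
    simpa using this
  have ins : ∫ z : ℂ, Complex.normSq z ∂μ = s 2 := by
    have := h11.2
    rw [hγ 1 1] at this
    have h2 : ((s 2 : ℝ) : ℂ) = ((∫ z : ℂ, Complex.normSq z ∂μ : ℝ) : ℂ) := by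
      rw [this]; exact integral_ofReal (𝕜 := ℂ)
    exact_mod_cast h2.symm
  have ire : ∫ z : ℂ, (z ^ 2).re ∂μ = s 2 := by
    have h := integral_re (𝕜 := ℂ) h20.1
    simp only [RCLike.re_to_complex] at h
    rw [h, ← h20.2, hγ 2 0]
    simp
  set g : ℂ → ℝ := fun z => Complex.normSq z - (z ^ 2).re with hg
  have hgval : ∀ z : ℂ, g z = 2 * z.im ^ 2 := by
    intro z
    simp only [hg, Complex.normSq_apply, Complex.sq_norm]
    rw [pow_two, Complex.mul_re]
    ring
  have hgint : Integrable g μ := hns.sub hre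
  have hgnn : 0 ≤ g := by
    intro z; rw [hgval z]; positivity
  have hgzero : ∫ z : ℂ, g z ∂μ = 0 := by
    rw [integral_sub hns hre, ins, ire, sub_self]
  have := (integral_eq_zero_iff_of_nonneg hgnn hgint).mp hgzero
  filter_upwards [this] with z hz
  have : 2 * z.im ^ 2 = 0 := by rw [← hgval z]; exact hz
  have : z.im ^ 2 = 0 := by linarith
  exact pow_eq_zero_iff two_ne_zero |>.mp this

lemma aux_backward (s : ℕ → ℝ) (γ : ℕ → ℕ → ℂ) (hγ : ∀ m n : ℕ, γ m n = (s (m + n) : ℂ))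
    (μ : Measure ℂ) (hμ : IsRepMeasure γ μ) :
    IsHamburgerRep s (Measure.map Complex.re μ) := by
  have hae := aux_ae_real s γ hγ μ hμ
  intro n
  have hmeas : AEMeasurable Complex.re μ := Complex.measurable_re.aemeasurable
  have hsm : AEStronglyMeasurable (fun x : ℝ => x ^ n) (Measure.map Complex.re μ) :=
    (continuous_pow n).aestronglyMeasurable
  have hcong : (fun z : ℂ => z.re ^ n) =ᵐ[μ] fun z => (z ^ n).re := by
    filter_upwards [hae] with z hz
    have hz' : (z.re : ℂ) = z := Complex.ext rfl (by simp [hz])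
    conv_rhs => rw [← hz']
    rw [← Complex.ofReal_pow, Complex.ofReal_re]
  have hn := hμ n 0
  simp only [pow_zero, mul_one] at hn
  have hintre : Integrable (fun z : ℂ => (z ^ n).re) μ := by
    have := hn.1.re; simpa using this
  constructor
  · rw [integrable_map_measure hsm hmeas]
    have : ((fun x : ℝ => x ^ n) ∘ Complex.re) = fun z : ℂ => z.re ^ n := rfl
    rw [this]
    exact hintre.congr hcong.symm
  · rw [integral_map hmeas hsm]
    have h1 : ∫ z : ℂ, z.re ^ n ∂μ = ∫ z : ℂ, (z ^ n).re ∂μ := integral_congr_ae hcong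
    have h2 := integral_re (𝕜 := ℂ) hn.1
    simp only [RCLike.re_to_complex] at h2
    rw [h1, h2, ← hn.2, hγ n 0]
    simp

lemma aux_inv1 (τ : Measure ℝ) :
    Measure.map Complex.re (Measure.map (fun x : ℝ => (x : ℂ)) τ) = τ := by
  rw [Measure.map_map Complex.measurable_re Complex.measurable_ofReal]
  rw [show Complex.re ∘ (fun x : ℝ => (x : ℂ)) = id from funext fun x => Complex.ofReal_re x]
  exact Measure.map_id

lemma aux_inv2 (μ : Measure ℂ) (hae : ∀ᵐ z ∂μ, z.im = 0) :
    Measure.map (fun x : ℝ => (x : ℂ)) (Measure.map Complex.re μ) = μ := by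
  rw [Measure.map_map Complex.measurable_ofReal Complex.measurable_re]
  have h : ((fun x : ℝ => (x : ℂ)) ∘ Complex.re) =ᵐ[μ] id := by
    filter_upwards [hae] with z hz
    exact Complex.ext rfl (by simpa using hz.symm)
  rw [Measure.map_congr h, Measure.map_id]

/-- For a real sequence `s` and `γ_{m,n} = s_{m+n}`, `s` is a Hamburger moment sequence iff
`γ` is a complex moment sequence, and `s` is determinate iff `γ` is determinate. -/
theorem stmt16 (s : ℕ → ℝ) (γ : ℕ → ℕ → ℂ) (hγ : ∀ m n : ℕ, γ m n = (s (m + n) : ℂ)) :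
    ((∃ τ : Measure ℝ, IsHamburgerRep s τ) ↔ (∃ μ : Measure ℂ, IsRepMeasure γ μ)) ∧
    ((∃! τ : Measure ℝ, IsHamburgerRep s τ) ↔ (∃! μ : Measure ℂ, IsRepMeasure γ μ)) := by
  constructor
  · constructor
    · rintro ⟨τ, hτ⟩
      exact ⟨_, aux_forward s γ hγ τ hτ⟩
    · rintro ⟨μ, hμ⟩
      exact ⟨_, aux_backward s γ hγ μ hμ⟩
  · constructor
    · rintro ⟨τ₀, hτ₀, huniq⟩
      refine ⟨Measure.map (fun x : ℝ => (x : ℂ)) τ₀, aux_forward s γ hγ τ₀ hτ₀, ?_⟩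
      intro μ hμ
      have h1 : Measure.map Complex.re μ = τ₀ := huniq _ (aux_backward s γ hγ μ hμ)
      rw [← aux_inv2 μ (aux_ae_real s γ hγ μ hμ), h1]
    · rintro ⟨μ₀, hμ₀, huniq⟩
      refine ⟨Measure.map Complex.re μ₀, aux_backward s γ hγ μ₀ hμ₀, ?_⟩
      intro τ hτ
      have h1 : Measure.map (fun x : ℝ => (x : ℂ)) τ = μ₀ := huniq _ (aux_forward s γ hγ τ hτ)
      rw [← aux_inv1 τ, h1]
end

section
/- Let s be a determinate Hamburger moment sequence whose unique representing measure μ has infinite support, and let t be an indeterminate Hamburger moment sequence. Then the two-dimensional sequence a_{m,n} = s_m · t_n is an indeterminate two-dimensional Hamburger moment sequence; more precisely, the map ν ↦ μ ⊗ ν from representing measures of t to representing measures of a is injective, so a has at least two representing measures. -/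
open MeasureTheory

/-- `ρ` is a representing measure for the two-dimensional Hamburger moment sequence `a`. -/
def IsHamburgerRep2 (a : ℕ → ℕ → ℝ) (ρ : Measure (ℝ × ℝ)) : Prop :=
  ∀ m n : ℕ, Integrable (fun p : ℝ × ℝ => p.1 ^ m * p.2 ^ n) ρ ∧
    a m n = ∫ p : ℝ × ℝ, p.1 ^ m * p.2 ^ n ∂ρ

/-- Let `s` be a determinate Hamburger moment sequence whose unique representing measure `μ`
is nonzero with infinite support, and let `t` be an indeterminate Hamburger moment sequence.
Then every product `μ ⊗ ν` with `ν` representing `t` represents `a_{m,n} = s_m t_n`, the map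
`ν ↦ μ ⊗ ν` is injective on representing measures of `t`, and consequently `a` is an
indeterminate two-dimensional Hamburger moment sequence. -/
theorem stmt18 (s t : ℕ → ℝ) (μ : Measure ℝ)
    (hμ : IsHamburgerRep s μ) (hdet : ∀ τ : Measure ℝ, IsHamburgerRep s τ → τ = μ)
    (hne : μ Set.univ ≠ 0)
    (hinf : ∀ S : Finset ℝ, μ ((S : Set ℝ))ᶜ ≠ 0)
    (hindet : ∃ ν₁ ν₂ : Measure ℝ, IsHamburgerRep t ν₁ ∧ IsHamburgerRep t ν₂ ∧ ν₁ ≠ ν₂) :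
    (∀ ν : Measure ℝ, IsHamburgerRep t ν →
      IsHamburgerRep2 (fun m n => s m * t n) (μ.prod ν)) ∧
    (∀ ν₁ ν₂ : Measure ℝ, IsHamburgerRep t ν₁ → IsHamburgerRep t ν₂ →
      μ.prod ν₁ = μ.prod ν₂ → ν₁ = ν₂) ∧
    (∃ ρ₁ ρ₂ : Measure (ℝ × ℝ), IsHamburgerRep2 (fun m n => s m * t n) ρ₁ ∧
      IsHamburgerRep2 (fun m n => s m * t n) ρ₂ ∧ ρ₁ ≠ ρ₂) := by
  obtain ⟨ν₁, ν₂, h1, h2, hne12⟩ := hindet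
  have hfin : ∀ (u : ℕ → ℝ) (τ : Measure ℝ), IsHamburgerRep u τ → IsFiniteMeasure τ := by
    intro u τ h
    have h0 := (h 0).1
    simp only [pow_zero] at h0
    rcases integrable_const_iff.1 h0 with h' | h'
    · norm_num at h'
    · exact h'
  haveI hμf := hfin s μ hμ
  have rep : ∀ ν : Measure ℝ, IsHamburgerRep t ν →
      IsHamburgerRep2 (fun m n => s m * t n) (μ.prod ν) := by
    intro ν hν
    haveI := hfin t ν hν
    intro m n
    refine ⟨Integrable.mul_prod (hμ m).1 (hν n).1, ?_⟩
    simp only []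
    rw [show (∫ p : ℝ × ℝ, p.1 ^ m * p.2 ^ n ∂μ.prod ν) = (∫ x : ℝ, x ^ m ∂μ) * ∫ y : ℝ, y ^ n ∂ν from integral_prod_mul (fun x => x ^ m) (fun y => y ^ n), (hμ m).2, (hν n).2]
  have inj : ∀ νa νb : Measure ℝ, IsHamburgerRep t νa → IsHamburgerRep t νb →
      μ.prod νa = μ.prod νb → νa = νb := by
    intro νa νb ha hb hp
    haveI := hfin t νa ha; haveI := hfin t νb hb
    ext B hB
    have key : μ Set.univ * νa B = μ Set.univ * νb B := by
      rw [← Measure.prod_prod, ← Measure.prod_prod, hp]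
    exact (ENNReal.mul_right_inj hne (measure_ne_top μ _)).1 key
  exact ⟨rep, inj, μ.prod ν₁, μ.prod ν₂, rep ν₁ h1, rep ν₂ h2,
    fun h => hne12 (inj ν₁ ν₂ h1 h2 h)⟩
end
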